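/- (Proposition 2, case P ≤ 0, deterministic form.) Let n ≥ 1, Δd > 0, η_c, η_d ∈ (0,1], p⁺ ≥ 0, p⁻ ≤ 0, e⁻, e⁺, e₀ ∈ ℝ, P ≤ 0, R ≥ 0, and signals s : Fin n → [−1,1]; write s^a_d = (1/(d+1))·Σ_{κ≤d} s(κ) for the running average. Suppose for every d: (i) η_c·(P − s(d)·R) ≤ p⁺; (ii) −(P − s(d)·R)/η_d + p⁻ ≤ 0; (iii) −(1/η_d)·(d+1)·Δd·P + ((1+η_c·η_d)/(2η_d)·s^a_d + (1−η_c·η_d)/(2η_d))·(d+1)·Δd·R − e₀ + e⁻ ≤ 0; (iv) η_c·(d+1)·Δd·P − η_c·s^a_d·(d+1)·Δd·R + e₀ − e⁺ ≤ 0. Then there exist P_c, P_d : Fin n → ℝ such that for every d: P − s(d)·R = P_c(d)/η_c + η_d·P_d(d), 0 ≤ P_c(d) ≤ p⁺, p⁻ ≤ P_d(d) ≤ 0, P_c(d)·P_d(d) = 0, and e⁻ ≤ e₀ + Δd·Σ_{κ≤d}(P_c(κ) + P_d(κ)) ≤ e⁺. -/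

import Mathlib

/-!
Dispatch the grid-side power `g = P - s R` of each interval greedily: charge `ηc g` when
`g ≥ 0`, discharge `g / ηd` when `g < 0`. The resulting net resource-side power is
`min (ηc g) (g / ηd)`, a concave function of the signal. It is at most `ηc g`, which is affine in
the signal, and, for `P ≤ 0` and `s ∈ [-1, 1]`, at least the chord through the signal values
`±1`, which is also affine. Summing up to interval `d` turns both bounds into expressions in the
running average `sa d`, and (iii), (iv) say exactly that these stay within `[e⁻, e⁺]`.
-/

open Finset

namespace Prop2

variable {ηc ηd : ℝ}

noncomputable def chargePower (ηc g : ℝ) : ℝ := max (ηc * g) 0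

noncomputable def dischargePower (ηd g : ℝ) : ℝ := min (g / ηd) 0

lemma chargePower_div_add_mul_dischargePower (hηc : 0 < ηc) (hηd : 0 < ηd) (g : ℝ) :
    chargePower ηc g / ηc + ηd * dischargePower ηd g = g := by
  unfold chargePower dischargePower
  rcases le_total 0 g with hg | hg
  · rw [max_eq_left (by positivity), min_eq_right (div_nonneg hg hηd.le)]
    field_simp
    ring
  · rw [max_eq_right (mul_nonpos_of_nonneg_of_nonpos hηc.le hg),
      min_eq_left (div_nonpos_of_nonpos_of_nonneg hg hηd.le)]
    field_simp
    ring

lemma chargePower_mul_dischargePower (hηc : 0 ≤ ηc) (hηd : 0 ≤ ηd) (g : ℝ) :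
    chargePower ηc g * dischargePower ηd g = 0 := by
  unfold chargePower dischargePower
  rcases le_total 0 g with hg | hg
  · rw [min_eq_right (div_nonneg hg hηd), mul_zero]
  · rw [max_eq_right (mul_nonpos_of_nonneg_of_nonpos hηc hg), zero_mul]

lemma chargePower_add_dischargePower (hηc : 0 ≤ ηc) (hηd : 0 < ηd) (hηcηd : ηc * ηd ≤ 1)
    (g : ℝ) : chargePower ηc g + dischargePower ηd g = min (ηc * g) (g / ηd) := by
  unfold chargePower dischargePower
  rcases le_total 0 g with hg | hg
  · have : ηc * g ≤ g / ηd := by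
      rw [le_div_iff₀ hηd]
      nlinarith
    rw [max_eq_left (mul_nonneg hηc hg), min_eq_right (div_nonneg hg hηd.le), min_eq_left this,
      add_zero]
  · have : g / ηd ≤ ηc * g := by
      rw [div_le_iff₀ hηd]
      nlinarith
    rw [max_eq_right (mul_nonpos_of_nonneg_of_nonpos hηc hg),
      min_eq_left (div_nonpos_of_nonpos_of_nonneg hg hηd.le), min_eq_right this, zero_add]

/-- The left side is the chord through `σ = ±1` of the concave `σ ↦ min (ηc g) (g / ηd)`,
`g = P - σ R`. -/
lemma chord_le_min (hηc : ηc ≤ 1) (hηd : 0 < ηd) (hηd₁ : ηd ≤ 1) {P R σ : ℝ} (hP : P ≤ 0) (hR : 0 ≤ R) (hσ : σ ∈ Set.Icc (-1 : ℝ) 1) :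
    P / ηd - ((1 + ηc * ηd) / (2 * ηd) * σ + (1 - ηc * ηd) / (2 * ηd)) * R
      ≤ min (ηc * (P - σ * R)) ((P - σ * R) / ηd) := by
  obtain ⟨hσ₁, hσ₂⟩ := hσ
  have hηcηd : ηc * ηd ≤ 1 := by nlinarith
  have hslack : 0 ≤ (1 - ηc * ηd) * R / (2 * ηd) := by
    have := sub_nonneg.mpr hηcηd
    positivity
  have hP' : P / ηd ≤ P := by
    rw [div_le_iff₀ hηd]
    nlinarith
  apply le_min
  · have key : ηc * (P - σ * R) -
        (P / ηd - ((1 + ηc * ηd) / (2 * ηd) * σ + (1 - ηc * ηd) / (2 * ηd)) * R)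
        = (P - P / ηd) - (1 - ηc) * P + (1 + σ) * ((1 - ηc * ηd) * R / (2 * ηd)) := by
      field_simp
      ring
    nlinarith [mul_nonneg (by linarith : (0 : ℝ) ≤ 1 + σ) hslack]
  · have key : (P - σ * R) / ηd -
        (P / ηd - ((1 + ηc * ηd) / (2 * ηd) * σ + (1 - ηc * ηd) / (2 * ηd)) * R)
        = (1 - σ) * ((1 - ηc * ηd) * R / (2 * ηd)) := by
      field_simp
      ring
    nlinarith [mul_nonneg (by linarith : (0 : ℝ) ≤ 1 - σ) hslack]

lemma sum_Iic_add_mul {n : ℕ} (s : Fin n → ℝ) (d : Fin n) (a b : ℝ) :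
    ∑ κ ∈ Iic d, (a + b * s κ)
      = ((d : ℕ) + 1 : ℝ) * (a + b * ((1 / ((d : ℕ) + 1 : ℝ)) * ∑ κ ∈ Iic d, s κ)) := by
  rw [sum_add_distrib, sum_const, ← mul_sum, Fin.card_Iic, nsmul_eq_mul]
  field_simp
  push_cast
  ring

end Prop2

open Prop2 in
theorem prop2_safe_approx_nonpos_general
    (n : ℕ) (Δd : ℝ) (hΔd : 0 < Δd)
    (ηc ηd : ℝ) (hηc : ηc ∈ Set.Ioc (0 : ℝ) 1) (hηd : ηd ∈ Set.Ioc (0 : ℝ) 1)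
    (pplus pminus : ℝ) (hpplus : 0 ≤ pplus) (hpminus : pminus ≤ 0)
    (eminus eplus e₀ : ℝ) (P R : ℝ) (hP : P ≤ 0) (hR : 0 ≤ R)
    (s : Fin n → ℝ) (hs : ∀ d, s d ∈ Set.Icc (-1 : ℝ) 1)
    (sa : Fin n → ℝ)
    (hsa : ∀ d : Fin n, sa d = (1 / ((d : ℕ) + 1 : ℝ)) * ∑ κ ∈ Iic d, s κ)
    (h1 : ∀ d : Fin n, ηc * (P - s d * R) ≤ pplus)
    (h2 : ∀ d : Fin n, -(P - s d * R) / ηd + pminus ≤ 0)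
    (h3 : ∀ d : Fin n,
      -(1 / ηd) * (((d : ℕ) + 1 : ℝ)) * Δd * P +
        ((1 + ηc * ηd) / (2 * ηd) * sa d + (1 - ηc * ηd) / (2 * ηd)) *
          (((d : ℕ) + 1 : ℝ)) * Δd * R - e₀ + eminus ≤ 0)
    (h4 : ∀ d : Fin n,
      ηc * (((d : ℕ) + 1 : ℝ)) * Δd * P -
        ηc * sa d * (((d : ℕ) + 1 : ℝ)) * Δd * R + e₀ - eplus ≤ 0) :
    ∃ Pc Pd : Fin n → ℝ, ∀ d : Fin n,
      P - s d * R = Pc d / ηc + ηd * Pd d ∧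
      0 ≤ Pc d ∧ Pc d ≤ pplus ∧ pminus ≤ Pd d ∧ Pd d ≤ 0 ∧
      Pc d * Pd d = 0 ∧
      eminus ≤ e₀ + Δd * ∑ κ ∈ Iic d, (Pc κ + Pd κ) ∧
      e₀ + Δd * ∑ κ ∈ Iic d, (Pc κ + Pd κ) ≤ eplus := by
  obtain ⟨hηc₀, hηc₁⟩ := hηc
  obtain ⟨hηd₀, hηd₁⟩ := hηd
  have hηcηd : ηc * ηd ≤ 1 := mul_le_one₀ hηc₁ hηd₀.le hηd₁
  refine ⟨fun d => chargePower ηc (P - s d * R), fun d => dischargePower ηd (P - s d * R),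
    fun d => ⟨(chargePower_div_add_mul_dischargePower hηc₀ hηd₀ _).symm, le_max_right _ _,
      max_le (h1 d) hpplus, le_min (by linarith [neg_div ηd (P - s d * R), h2 d]) hpminus,
      min_le_right _ _, chargePower_mul_dischargePower hηc₀.le hηd₀.le _, ?_, ?_⟩⟩
  all_goals simp only [chargePower_add_dischargePower hηc₀.le hηd₀ hηcηd]
  · have hchord : ∑ κ ∈ Iic d,
        (P / ηd - (1 - ηc * ηd) / (2 * ηd) * R + (-((1 + ηc * ηd) / (2 * ηd) * R)) * s κ)
          ≤ ∑ κ ∈ Iic d, min (ηc * (P - s κ * R)) ((P - s κ * R) / ηd) :=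
      sum_le_sum fun κ _ => by linarith [chord_le_min hηc₁ hηd₀ hηd₁ hP hR (hs κ)]
    rw [sum_Iic_add_mul, ← hsa] at hchord
    linear_combination h3 d + mul_le_mul_of_nonneg_left hchord hΔd.le
  · have hupper : ∑ κ ∈ Iic d, min (ηc * (P - s κ * R)) ((P - s κ * R) / ηd)
          ≤ ∑ κ ∈ Iic d, (ηc * P + (-(ηc * R)) * s κ) :=
      sum_le_sum fun κ _ => by linarith [min_le_left (ηc * (P - s κ * R)) ((P - s κ * R) / ηd)]
    rw [sum_Iic_add_mul, ← hsa] at hupper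
    linear_combination h4 d + mul_le_mul_of_nonneg_left hupper hΔd.le

/-- Proposition 2 (case `P ≤ 0`, deterministic form): the eliminated
constraints (26)–(29) are a safe approximation of the original per-interval
power, complementarity and cumulative-energy constraints (16)–(22). -/
theorem prop2_safe_approx_nonpos
    (n : ℕ) (hn : 1 ≤ n) (Δd : ℝ) (hΔd : 0 < Δd)
    (ηc ηd : ℝ) (hηc : ηc ∈ Set.Ioc (0 : ℝ) 1) (hηd : ηd ∈ Set.Ioc (0 : ℝ) 1)
    (pplus pminus : ℝ) (hpplus : 0 ≤ pplus) (hpminus : pminus ≤ 0)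
    (eminus eplus e₀ : ℝ) (P R : ℝ) (hP : P ≤ 0) (hR : 0 ≤ R)
    (s : Fin n → ℝ) (hs : ∀ d, s d ∈ Set.Icc (-1 : ℝ) 1)
    (sa : Fin n → ℝ)
    (hsa : ∀ d : Fin n, sa d = (1 / ((d : ℕ) + 1 : ℝ)) * ∑ κ ∈ Iic d, s κ)
    (h1 : ∀ d : Fin n, ηc * (P - s d * R) ≤ pplus)
    (h2 : ∀ d : Fin n, -(P - s d * R) / ηd + pminus ≤ 0)
    (h3 : ∀ d : Fin n,
      -(1 / ηd) * (((d : ℕ) + 1 : ℝ)) * Δd * P +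
        ((1 + ηc * ηd) / (2 * ηd) * sa d + (1 - ηc * ηd) / (2 * ηd)) *
          (((d : ℕ) + 1 : ℝ)) * Δd * R - e₀ + eminus ≤ 0)
    (h4 : ∀ d : Fin n,
      ηc * (((d : ℕ) + 1 : ℝ)) * Δd * P -
        ηc * sa d * (((d : ℕ) + 1 : ℝ)) * Δd * R + e₀ - eplus ≤ 0) :
    ∃ Pc Pd : Fin n → ℝ, ∀ d : Fin n,
      P - s d * R = Pc d / ηc + ηd * Pd d ∧
      0 ≤ Pc d ∧ Pc d ≤ pplus ∧ pminus ≤ Pd d ∧ Pd d ≤ 0 ∧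
      Pc d * Pd d = 0 ∧
      eminus ≤ e₀ + Δd * ∑ κ ∈ Iic d, (Pc κ + Pd κ) ∧
      e₀ + Δd * ∑ κ ∈ Iic d, (Pc κ + Pd κ) ≤ eplus :=
  prop2_safe_approx_nonpos_general n Δd hΔd ηc ηd hηc hηd pplus pminus hpplus hpminus eminus eplus
    e₀ P R hP hR s hs sa hsa h1 h2 h3 h4
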